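/- arXiv:1710.09731 — 5 statements merged into one kernel-verified Lean document; each statement's English description precedes it below -/
import Mathlib

section
/- For every integer n ≥ 1, the alternating sum (1/n!) ∑_{j=0}^{n} C(n,j) (−1)^{n−j} j^{n+1} equals n(n+1)/2. -/
open Finset fwdDiff

private lemma fd_pow (m : ℕ) :
    Δ_[(1:ℚ)] (fun x : ℚ => x ^ m) =
      fun x => ∑ k ∈ Finset.range m, (m.choose k : ℚ) * x ^ k := by
  funext x
  have h := add_pow x (1:ℚ) m
  simp only [one_pow, mul_one] at h
  rw [Finset.sum_range_succ, Nat.choose_self, Nat.cast_one, mul_one] at h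
  simp [fwdDiff, h]
  exact Finset.sum_congr rfl (fun k _ => mul_comm _ _)

private lemma fd_zero : ∀ m : ℕ, ∀ n : ℕ, m < n →
    (Δ_[(1:ℚ)])^[n] (fun x : ℚ => x ^ m) = 0 := by
  intro m
  induction m using Nat.strong_induction_on with
  | _ m ih =>
    intro n hmn
    obtain ⟨n, rfl⟩ : ∃ k, n = k + 1 := ⟨n - 1, by omega⟩
    rw [Function.iterate_succ_apply, fd_pow]
    have : (fun x : ℚ => ∑ k ∈ Finset.range m, (m.choose k : ℚ) * x ^ k)
        = ∑ k ∈ Finset.range m, (((m.choose k : ℚ)) • (fun x : ℚ => x ^ k)) := by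
      funext x; simp
    rw [this, fwdDiff_iter_finset_sum]
    refine Finset.sum_eq_zero fun k hk => ?_
    have hk' := Finset.mem_range.1 hk
    rw [fwdDiff_iter_const_smul, ih k hk' n (by omega)]
    simp

private lemma fd_diag : ∀ n : ℕ,
    (Δ_[(1:ℚ)])^[n] (fun x : ℚ => x ^ n) = fun _ => (n.factorial : ℚ) := by
  intro n
  induction n with
  | zero => funext x; simp
  | succ n ih =>
    rw [Function.iterate_succ_apply, fd_pow]
    have : (fun x : ℚ => ∑ k ∈ Finset.range (n+1), ((n+1).choose k : ℚ) * x ^ k)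
        = ∑ k ∈ Finset.range (n+1), (((n+1).choose k : ℚ) • (fun x : ℚ => x ^ k)) := by
      funext x; simp
    have hz : ∀ k ∈ Finset.range n,
        (Δ_[(1:ℚ)])^[n] (((n+1).choose k : ℚ) • (fun x : ℚ => x ^ k)) = 0 := by
      intro k hk
      rw [fwdDiff_iter_const_smul, fd_zero k n (Finset.mem_range.1 hk)]; simp
    rw [this, fwdDiff_iter_finset_sum, Finset.sum_range_succ, Finset.sum_eq_zero hz,
      zero_add, fwdDiff_iter_const_smul, ih]
    funext x
    simp [Nat.choose_succ_self_right, Nat.factorial_succ]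

private lemma fd_main : ∀ n : ℕ,
    (Δ_[(1:ℚ)])^[n] (fun x : ℚ => x ^ (n+1)) =
      fun x => ((n+1).factorial : ℚ) * x + (n.factorial : ℚ) * n * (n+1) / 2 := by
  intro n
  induction n with
  | zero => funext x; simp
  | succ n ih =>
    rw [Function.iterate_succ_apply, fd_pow]
    have : (fun x : ℚ => ∑ k ∈ Finset.range (n+2), ((n+2).choose k : ℚ) * x ^ k)
        = ∑ k ∈ Finset.range (n+2), (((n+2).choose k : ℚ) • (fun x : ℚ => x ^ k)) := by
      funext x; simp
    have hz : ∀ k ∈ Finset.range n,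
        (Δ_[(1:ℚ)])^[n] (((n+2).choose k : ℚ) • (fun x : ℚ => x ^ k)) = 0 := by
      intro k hk
      rw [fwdDiff_iter_const_smul, fd_zero k n (Finset.mem_range.1 hk)]; simp
    rw [this, fwdDiff_iter_finset_sum, Finset.sum_range_succ, Finset.sum_range_succ,
      Finset.sum_eq_zero hz, zero_add, fwdDiff_iter_const_smul, fwdDiff_iter_const_smul,
      fd_diag n, ih]
    have hc1 : ((n+2).choose n : ℚ) = (n+2) * (n+1) / 2 := by
      have : (n+2).choose n = (n+2).choose 2 := by
        rw [← Nat.choose_symm (by omega : 2 ≤ n+2)]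
        norm_num
      rw [this, Nat.cast_choose_two]
      push_cast; ring
    have hc2 : ((n+2).choose (n+1) : ℚ) = (n+2) := by
      rw [Nat.choose_succ_self_right]; push_cast; ring
    funext x
    simp only [Pi.add_apply, Pi.smul_apply, smul_eq_mul, hc1, hc2, Nat.factorial_succ]
    push_cast
    ring

/-- For every integer `n ≥ 1`, `(1/n!) ∑_{j=0}^{n} C(n,j) (−1)^{n−j} j^{n+1} = n(n+1)/2`. -/
theorem stmt_2 (n : ℕ) (hn : 1 ≤ n) :
    (1 / (n.factorial : ℚ)) *
      ∑ j ∈ Finset.range (n + 1), (n.choose j : ℚ) * (-1 : ℚ) ^ (n - j) * (j : ℚ) ^ (n + 1)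
      = (n : ℚ) * (n + 1) / 2 := by
  have h := fwdDiff_iter_eq_sum_shift (M := ℚ) (G := ℚ) 1 (fun x : ℚ => x ^ (n+1)) n 0
  rw [fd_main n] at h
  simp only [zero_add, nsmul_eq_mul, mul_one, zsmul_eq_mul, smul_eq_mul] at h
  push_cast at h
  have hs : ∑ j ∈ Finset.range (n + 1), (n.choose j : ℚ) * (-1 : ℚ) ^ (n - j) * (j : ℚ) ^ (n + 1)
      = ∑ j ∈ Finset.range (n + 1), ((-1 : ℚ) ^ (n - j) * (n.choose j : ℚ)) * (j : ℚ) ^ (n + 1) :=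
    Finset.sum_congr rfl fun k _ => by ring
  rw [hs, ← h]
  have hf : (n.factorial : ℚ) ≠ 0 := Nat.cast_ne_zero.2 n.factorial_ne_zero
  field_simp
  ring
end

section
/- Let n ≥ 0 and let A^n be the inverse of the (n+1)×(n+1) Vandermonde matrix V^n with entries V^n_{i,j} = i^j (indices 0 ≤ i,j ≤ n). Then the last row of A^n is given by A^n_{n,j} = (1/n!) C(n,j) (−1)^{n−j}. -/
open Matrix
open Finset fwdDiff

lemma fwdDiff_pow (k : ℕ) :
    Δ_[(1:ℚ)] (fun x : ℚ => x ^ k)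
      = ∑ i ∈ Finset.range k, (k.choose i : ℚ) • (fun x : ℚ => x ^ i) := by
  ext x
  simp only [fwdDiff, Finset.sum_apply, Pi.smul_apply, smul_eq_mul]
  rw [add_pow]
  rw [Finset.sum_range_succ]
  simp [mul_comm]

lemma fwdDiff_iter_pow_zero (n : ℕ) : ∀ k ≤ n,
    (Δ_[(1:ℚ)])^[n] (fun x : ℚ => x ^ k) 0 = if k = n then (n.factorial : ℚ) else 0 := by
  induction n with
  | zero => intro k hk; interval_cases k; simp
  | succ n IH =>
    intro k hk
    rw [Function.iterate_succ_apply, fwdDiff_pow]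
    rw [fwdDiff_iter_finset_sum]
    simp only [fwdDiff_iter_const_smul, Finset.sum_apply, Pi.smul_apply, smul_eq_mul]
    have hsum : ∀ i ∈ Finset.range k, (k.choose i : ℚ) * (Δ_[(1:ℚ)])^[n] (fun x : ℚ => x ^ i) 0
        = (k.choose i : ℚ) * (if i = n then (n.factorial : ℚ) else 0) := by
      intro i hi
      have := Finset.mem_range.mp hi
      rw [IH i (by omega)]
    rw [Finset.sum_congr rfl hsum]
    rcases eq_or_lt_of_le hk with rfl | hlt
    · rw [if_pos rfl]
      rw [Finset.sum_eq_single n (fun b _ hb => by simp [hb]) (fun h => by simp at h)]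
      simp [Nat.choose_succ_self_right, Nat.factorial_succ]
    · rw [if_neg (by omega)]
      apply Finset.sum_eq_zero
      intro i hi
      simp only [Finset.mem_range] at hi
      rw [if_neg (by omega), mul_zero]

lemma key_sum (n k : ℕ) (hk : k ≤ n) :
    ∑ m ∈ Finset.range (n + 1),
      ((1 / (n.factorial : ℚ)) * (n.choose m : ℚ) * (-1 : ℚ) ^ (n - m)) * (m : ℚ) ^ k
      = if k = n then 1 else 0 := by
  have h := fwdDiff_iter_eq_sum_shift (1:ℚ) (fun x : ℚ => x ^ k) n 0
  rw [fwdDiff_iter_pow_zero n k hk] at h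
  have h2 : (if k = n then (n.factorial : ℚ) else 0)
      = ∑ m ∈ Finset.range (n + 1), ((-1 : ℚ) ^ (n - m) * (n.choose m : ℚ)) * (m : ℚ) ^ k := by
    rw [h]
    apply Finset.sum_congr rfl
    intro m _
    ring_nf
    simp [zsmul_eq_mul]
  have hne : (n.factorial : ℚ) ≠ 0 := Nat.cast_ne_zero.mpr n.factorial_ne_zero
  rw [Finset.sum_congr rfl (fun m _ => by ring_nf :
    ∀ m ∈ Finset.range (n+1), ((1 / (n.factorial : ℚ)) * (n.choose m : ℚ) * (-1 : ℚ) ^ (n - m)) * (m : ℚ) ^ k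
      = (n.factorial : ℚ)⁻¹ * (((-1 : ℚ) ^ (n - m) * (n.choose m : ℚ)) * (m : ℚ) ^ k))]
  rw [← Finset.mul_sum, ← h2]
  split_ifs with hkn
  · field_simp
  · simp


/-- Let `A^n` be the inverse of the `(n+1)×(n+1)` Vandermonde matrix `V^n` with entries
`V^n_{i,j} = i^j`. Then the last row of `A^n` is `A^n_{n,j} = (1/n!) C(n,j) (−1)^{n−j}`. -/
theorem stmt_4 (n : ℕ) (A : Matrix (Fin (n + 1)) (Fin (n + 1)) ℚ)
    (hA : A = (Matrix.vandermonde (fun i : Fin (n + 1) => (i : ℚ)))⁻¹) (j : Fin (n + 1)) :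
    A (Fin.last n) j
      = (1 / (n.factorial : ℚ)) * (n.choose j : ℚ) * (-1 : ℚ) ^ (n - (j : ℕ)) := by
  subst hA
  set V := Matrix.vandermonde (fun i : Fin (n + 1) => (i : ℚ)) with hV
  have hdet : V.det ≠ 0 := by
    rw [hV, Matrix.det_vandermonde_ne_zero_iff]
    intro a b hab
    exact Fin.ext (Nat.cast_injective hab)
  set w : Fin (n + 1) → ℚ :=
    fun j => (1 / (n.factorial : ℚ)) * (n.choose j : ℚ) * (-1 : ℚ) ^ (n - (j : ℕ)) with hw
  have hwV : w ᵥ* V = Pi.single (Fin.last n) 1 := by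
    ext k
    have hk : (k : ℕ) ≤ n := Nat.lt_succ_iff.mp k.isLt
    have := key_sum n k hk
    rw [← Fin.sum_univ_eq_sum_range
      (fun m => ((1 / (n.factorial : ℚ)) * (n.choose m : ℚ) * (-1 : ℚ) ^ (n - m)) * (m : ℚ) ^ (k:ℕ))] at this
    simp only [Matrix.vecMul, dotProduct, hV, Matrix.vandermonde_apply]
    rw [this]
    rw [Pi.single_apply]
    congr 1
    simp [Fin.ext_iff, Fin.last, eq_comm]
  have hmul : V * V⁻¹ = 1 := Matrix.mul_nonsing_inv V (isUnit_iff_ne_zero.mpr hdet)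
  have h2 := congrArg (fun u => u ᵥ* V⁻¹) hwV
  simp only [Matrix.vecMul_vecMul, hmul, Matrix.vecMul_one] at h2
  have h3 := congrFun h2 j
  rw [hw] at h3
  dsimp only at h3
  have h4 : (Pi.single (Fin.last n) 1 ᵥ* V⁻¹) j = V⁻¹ (Fin.last n) j := by
    simp [Matrix.vecMul, dotProduct, Pi.single_apply, ite_mul]
  rw [← h4, ← h3]
end

section
/- In the polynomial ring ℚ[x,y], for every n ≥ 1 one has the partial polarization identity x·y^n = (1/(n+1)) ∑_{j=0}^{n} (1/n!) C(n,j) (−1)^{n−j} (x + j·y)^{n+1} − (n/2)·y^{n+1}. -/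
/-!
The sum is `(1 / n!)` times the `n`-th forward difference at `0` of `t ↦ (x + t y) ^ (n + 1)`.
Expanding in powers of `t`, `Δⁿ` kills `tⁱ` for `i < n`, sends `tⁿ` to `n!`, and sends `tⁿ⁺¹`
to `n! · C(n+1, 2)` at `0`; so the sum equals `(n + 1) x yⁿ + C(n+1, 2) yⁿ⁺¹`.
-/

open Finset Function fwdDiff Nat

lemma choose_two_mul_factorial_succ (n : ℕ) :
    (n + 2).choose 2 * (n + 1)! = (n + 2) * ((n + 1).choose 2 * n !) + (n + 2).choose n * n ! := by
  have h := choose_mul_succ_eq (n + 1) 2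
  rw [choose_symm_of_eq_add (by omega : n + 2 = n + 2), factorial_succ]
  simp only [show n + 1 + 1 - 2 = n by omega] at h
  nlinarith [h]

section CommRing

variable {R : Type*} [CommRing R]

lemma fwdDiff_pow_succ (n : ℕ) :
    (Δ_[1] fun r : R ↦ r ^ (n + 1)) = ∑ i ∈ range (n + 1), (n + 1).choose i • fun r ↦ r ^ i := by
  ext x
  simp [nsmul_eq_mul, fwdDiff, add_pow, sum_range_succ, mul_comm]

theorem fwdDiff_iter_pow_succ_apply_zero (n : ℕ) :
    (Δ_[1])^[n] (fun r : R ↦ r ^ (n + 1)) 0 = ((n + 1).choose 2 * n ! : ℕ) := by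
  induction n with
  | zero => simp
  | succ n ih =>
    have hlow : ∀ i ∈ range n, (n + 2).choose i • (Δ_[1])^[n] (fun r : R ↦ r ^ i) 0 = 0 :=
      fun i hi ↦ by
        rw [fwdDiff_iter_pow_eq_zero_of_lt (mem_range.mp hi), Pi.zero_apply, smul_zero]
    simp_rw [iterate_succ_apply, fwdDiff_pow_succ, fwdDiff_iter_finsetSum, Finset.sum_apply,
      fwdDiff_iter_const_smul, Pi.smul_apply]
    rw [sum_range_succ, sum_range_succ, sum_eq_zero hlow, zero_add, ih, fwdDiff_iter_eq_factorial,
      Pi.natCast_apply, choose_two_mul_factorial_succ, choose_succ_self_right]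
    push_cast
    ring

theorem fwdDiff_iter_add_mul_pow_succ_apply_zero (a b : R) (n : ℕ) :
    (Δ_[1])^[n] (fun t : R ↦ (a + t * b) ^ (n + 1)) 0
      = n ! * ((n + 1) * a * b ^ n + (n + 1).choose 2 * b ^ (n + 1)) := by
  have hexpand : (fun t : R ↦ (a + t * b) ^ (n + 1))
      = ∑ i ∈ range (n + 2), ((n + 1).choose i * a ^ (n + 1 - i) * b ^ i) • fun t ↦ t ^ i := by
    ext t
    rw [add_comm, add_pow, Finset.sum_apply]
    exact sum_congr rfl fun i _ ↦ by simp only [Pi.smul_apply, smul_eq_mul]; ring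
  have hlow : ∀ i ∈ range n, ((n + 1).choose i * a ^ (n + 1 - i) * b ^ i) •
      (Δ_[1])^[n] (fun r : R ↦ r ^ i) 0 = 0 :=
    fun i hi ↦ by rw [fwdDiff_iter_pow_eq_zero_of_lt (mem_range.mp hi), Pi.zero_apply, smul_zero]
  simp_rw [hexpand, fwdDiff_iter_finsetSum, Finset.sum_apply, fwdDiff_iter_const_smul,
    Pi.smul_apply]
  rw [sum_range_succ, sum_range_succ, sum_eq_zero hlow, zero_add, fwdDiff_iter_eq_factorial,
    Pi.natCast_apply, fwdDiff_iter_pow_succ_apply_zero, choose_succ_self_right, choose_self,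
    Nat.sub_self, show n + 1 - n = 1 by omega]
  push_cast
  ring

end CommRing

open MvPolynomial

theorem stmt_7_general (n : ℕ) :
    (X 0 * X 1 ^ n : MvPolynomial (Fin 2) ℚ)
      = C (1 / ((n : ℚ) + 1)) *
          ∑ j ∈ Finset.range (n + 1),
            C ((1 / (n.factorial : ℚ)) * (n.choose j : ℚ) * (-1 : ℚ) ^ (n - j)) *
              (X 0 + C (j : ℚ) * X 1) ^ (n + 1)
        - C ((n : ℚ) / 2) * X 1 ^ (n + 1) := by
  set x : MvPolynomial (Fin 2) ℚ := X 0
  set y : MvPolynomial (Fin 2) ℚ := X 1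
  have hsum : ∑ j ∈ range (n + 1), C ((1 / (n ! : ℚ)) * (n.choose j : ℚ) * (-1 : ℚ) ^ (n - j)) *
        (x + C (j : ℚ) * y) ^ (n + 1)
      = C (1 / (n ! : ℚ)) * (Δ_[1])^[n] (fun t ↦ (x + t * y) ^ (n + 1)) 0 := by
    rw [fwdDiff_iter_eq_sum_shift, mul_sum]
    refine sum_congr rfl fun j _ ↦ ?_
    simp only [zero_add, nsmul_eq_mul, mul_one, zsmul_eq_mul, C_mul, map_natCast, map_pow, map_neg,
      map_one]
    push_cast
    ring
  have hinv_succ : C (1 / ((n : ℚ) + 1)) * ((n : MvPolynomial (Fin 2) ℚ) + 1) = 1 := by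
    rw [← map_natCast C, ← C_1, ← C_add, ← C_mul]
    field_simp
  have hinv_factorial : C (1 / (n ! : ℚ)) * (n ! : MvPolynomial (Fin 2) ℚ) = 1 := by
    rw [← map_natCast C, ← C_1, ← C_mul]
    field_simp
  have hchoose : ((n + 1).choose 2 : MvPolynomial (Fin 2) ℚ)
      = C ((n : ℚ) / 2) * ((n : MvPolynomial (Fin 2) ℚ) + 1) := by
    rw [← map_natCast C, ← map_natCast C, ← C_1, ← C_add, ← C_mul, cast_choose_two]
    congr 1
    push_cast
    ring
  rw [hsum, fwdDiff_iter_add_mul_pow_succ_apply_zero, hchoose]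
  linear_combination
    (-(C (1 / ((n : ℚ) + 1)) * ((n : MvPolynomial (Fin 2) ℚ) + 1)) *
      (x * y ^ n + C ((n : ℚ) / 2) * y ^ (n + 1))) * hinv_factorial
    - (x * y ^ n + C ((n : ℚ) / 2) * y ^ (n + 1)) * hinv_succ

/-- In `ℚ[x,y]`, for every `n ≥ 1`,
`x·y^n = (1/(n+1)) ∑_{j=0}^{n} (1/n!) C(n,j) (−1)^{n−j} (x + j·y)^{n+1} − (n/2)·y^{n+1}`. -/
theorem stmt_7 (n : ℕ) (hn : 1 ≤ n) :
    (X 0 * X 1 ^ n : MvPolynomial (Fin 2) ℚ)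
      = C (1 / ((n : ℚ) + 1)) *
          ∑ j ∈ Finset.range (n + 1),
            C ((1 / (n.factorial : ℚ)) * (n.choose j : ℚ) * (-1 : ℚ) ^ (n - j)) *
              (X 0 + C (j : ℚ) * X 1) ^ (n + 1)
        - C ((n : ℚ) / 2) * X 1 ^ (n + 1) :=
  stmt_7_general n
end

section
/- For every integer i ≥ 1, ∑_{j=0}^{i−1} (1/(i−1)!) C(i−1, j) (−1)^{i−1−j} (j+1)^i = i(i+1)/2. -/
open Finset fwdDiff

lemma fd_pow_expand (k : ℕ) :
    Δ_[1] (fun x : ℚ ↦ x ^ k) =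
      ∑ l ∈ Finset.range k, (k.choose l : ℚ) • (fun x : ℚ ↦ x ^ l) := by
  ext x
  simp only [fwdDiff, Finset.sum_apply, Pi.smul_apply, smul_eq_mul]
  have h := add_pow x (1:ℚ) k
  simp only [one_pow, mul_one] at h
  rw [h, Finset.sum_range_succ, Nat.choose_self, Nat.cast_one, mul_one, add_sub_cancel_right]
  exact Finset.sum_congr rfl fun l _ ↦ mul_comm _ _

lemma fd_step (k n : ℕ) (x : ℚ) :
    (Δ_[(1:ℚ)])^[n+1] (fun x : ℚ ↦ x ^ k) x =
      ∑ l ∈ Finset.range k, (k.choose l : ℚ) * (Δ_[(1:ℚ)])^[n] (fun x : ℚ ↦ x ^ l) x := by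
  rw [Function.iterate_succ_apply, fd_pow_expand, fwdDiff_iter_finset_sum]
  simp [fwdDiff_iter_const_smul]

lemma key : ∀ n : ℕ,
    (∀ k, k < n → ∀ x : ℚ, (Δ_[(1:ℚ)])^[n] (fun x : ℚ ↦ x ^ k) x = 0) ∧
    (∀ x : ℚ, (Δ_[(1:ℚ)])^[n] (fun x : ℚ ↦ x ^ n) x = n.factorial) ∧
    (∀ x : ℚ, (Δ_[(1:ℚ)])^[n] (fun x : ℚ ↦ x ^ (n+1)) x
        = (n+1).factorial * x + n.factorial * n * (n+1) / 2) := by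
  intro n
  induction n with
  | zero => refine ⟨fun k hk ↦ absurd hk (Nat.not_lt_zero k), fun x ↦ by simp, fun x ↦ by simp⟩
  | succ n IH =>
    obtain ⟨A, B, C⟩ := IH
    refine ⟨fun k hk x ↦ ?_, fun x ↦ ?_, fun x ↦ ?_⟩
    · rw [fd_step]
      refine Finset.sum_eq_zero fun l hl ↦ ?_
      rw [A l (lt_of_lt_of_le (Finset.mem_range.mp hl) (Nat.lt_succ_iff.mp hk)), mul_zero]
    · rw [fd_step, Finset.sum_range_succ, B]
      rw [Finset.sum_eq_zero fun l hl ↦ by rw [A l (Finset.mem_range.mp hl), mul_zero]]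
      simp [Nat.factorial_succ]
    · have : n + 1 + 1 = n + 2 := rfl
      rw [this, fd_step, Finset.sum_range_succ, Finset.sum_range_succ]
      rw [Finset.sum_eq_zero fun l hl ↦ by rw [A l (Finset.mem_range.mp hl), mul_zero]]
      rw [B, show n + 2 = n + 1 + 1 from rfl] at *
      rw [C]
      have h1 : ((n+2).choose (n+1) : ℚ) = (n+2 : ℕ) := by
        rw [Nat.choose_succ_self_right]
      have h2 : ((n+2).choose n : ℚ) = (n+2) * (n+1) / 2 := by
        rw [show (n+2).choose n = (n+2).choose 2 by rw [← Nat.choose_symm (by omega)]; norm_num,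
          Nat.cast_choose_two]
        push_cast; ring
      push_cast [h1, h2, Nat.factorial_succ]
      ring

/-- For every integer `i ≥ 1`,
`∑_{j=0}^{i−1} (1/(i−1)!) C(i−1,j) (−1)^{i−1−j} (j+1)^i = i(i+1)/2`. -/
theorem stmt_14 (i : ℕ) (hi : 1 ≤ i) :
    ∑ j ∈ Finset.range i,
        (1 / ((i - 1).factorial : ℚ)) * ((i - 1).choose j : ℚ) * (-1 : ℚ) ^ (i - 1 - j) *
          ((j : ℚ) + 1) ^ i
      = (i : ℚ) * ((i : ℚ) + 1) / 2 := by
  obtain ⟨n, rfl⟩ : ∃ n, i = n + 1 := ⟨i - 1, (Nat.succ_pred_eq_of_pos hi).symm⟩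
  simp only [Nat.add_sub_cancel]
  have hkey := (key n).2.2 1
  rw [fwdDiff_iter_eq_sum_shift (1:ℚ) (fun x : ℚ ↦ x ^ (n+1)) n 1] at hkey
  have hsum : ∑ j ∈ Finset.range (n+1),
      (((-1:ℤ)^(n-j) * (n.choose j : ℤ)) • ((1:ℚ) + j • (1:ℚ)) ^ (n+1))
      = ∑ j ∈ Finset.range (n+1),
        ((n.choose j : ℚ) * (-1:ℚ)^(n-j) * ((j:ℚ)+1)^(n+1)) := by
    refine Finset.sum_congr rfl fun j _ ↦ ?_
    push_cast [zsmul_eq_mul, nsmul_eq_mul]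
    ring
  rw [hsum] at hkey
  have hfac : ((n.factorial : ℚ)) ≠ 0 := Nat.cast_ne_zero.mpr n.factorial_ne_zero
  calc ∑ j ∈ Finset.range (n+1),
        (1 / (n.factorial : ℚ)) * (n.choose j : ℚ) * (-1:ℚ)^(n-j) * ((j:ℚ)+1)^(n+1)
      = (1 / (n.factorial : ℚ)) * ∑ j ∈ Finset.range (n+1),
          ((n.choose j : ℚ) * (-1:ℚ)^(n-j) * ((j:ℚ)+1)^(n+1)) := by
        rw [Finset.mul_sum]; exact Finset.sum_congr rfl fun j _ ↦ by ring
    _ = (1 / (n.factorial : ℚ)) * ((n+1).factorial * 1 + n.factorial * n * (n+1) / 2) := by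
        rw [hkey]
    _ = ((n+1:ℕ) : ℚ) * (((n+1:ℕ) : ℚ) + 1) / 2 := by
        rw [Nat.factorial_succ]; push_cast; field_simp; ring
end

section
/- For every integer i ≥ 1, ∑_{j=0}^{i−1} (1/(i−1)!) C(i−1, j) (−1)^{i−1−j} j^i = i(i−1)/2. -/
private def myG (n m : ℕ) : ℚ :=
  ∑ j ∈ Finset.range (n + 1), (-1 : ℚ) ^ j * (n.choose j : ℚ) * (j : ℚ) ^ m

private lemma myG_rec (n m : ℕ) :
    myG (n + 1) m = -∑ t ∈ Finset.range m, (m.choose t : ℚ) * myG n t := by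
  have key : ∀ j : ℕ, ((j : ℚ) + 1) ^ m
      = ∑ t ∈ Finset.range (m + 1), (j : ℚ) ^ t * (m.choose t : ℚ) := by
    intro j
    rw [add_pow]
    exact Finset.sum_congr rfl fun t _ => by ring
  have h2 : ∑ j ∈ Finset.range (n + 1), (-1 : ℚ) ^ j * (n.choose j : ℚ) * ((j : ℚ) + 1) ^ m
      = ∑ t ∈ Finset.range (m + 1), (m.choose t : ℚ) * myG n t := by
    calc ∑ j ∈ Finset.range (n + 1), (-1 : ℚ) ^ j * (n.choose j : ℚ) * ((j : ℚ) + 1) ^ m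
        = ∑ j ∈ Finset.range (n + 1), ∑ t ∈ Finset.range (m + 1),
            (m.choose t : ℚ) * ((-1 : ℚ) ^ j * (n.choose j : ℚ) * (j : ℚ) ^ t) := by
          refine Finset.sum_congr rfl fun j _ => ?_
          rw [key, Finset.mul_sum]
          exact Finset.sum_congr rfl fun t _ => by ring
      _ = ∑ t ∈ Finset.range (m + 1), (m.choose t : ℚ) * myG n t := by
          rw [Finset.sum_comm]
          exact Finset.sum_congr rfl fun t _ => by rw [myG, Finset.mul_sum]
  have h3 : ∑ j ∈ Finset.range (n + 1), (-1 : ℚ) ^ j * (n.choose (j + 1) : ℚ) * ((j : ℚ) + 1) ^ m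
      = (0 : ℚ) ^ m - myG n m := by
    have hG := Finset.sum_range_succ'
      (fun j => (-1 : ℚ) ^ j * (n.choose j : ℚ) * (j : ℚ) ^ m) n
    rw [Finset.sum_range_succ]
    simp only [Nat.choose_succ_self, Nat.cast_zero, mul_zero, zero_mul, add_zero]
    have hGm : myG n m = (∑ j ∈ Finset.range n,
        (-1 : ℚ) ^ (j + 1) * (n.choose (j + 1) : ℚ) * ((j + 1 : ℕ) : ℚ) ^ m)
        + (-1 : ℚ) ^ 0 * (n.choose 0 : ℚ) * ((0 : ℕ) : ℚ) ^ m := hG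
    have h4 : ∑ j ∈ Finset.range n,
        (-1 : ℚ) ^ j * (n.choose (j + 1) : ℚ) * ((j : ℚ) + 1) ^ m
        = -(myG n m - (0 : ℚ) ^ m) := by
      rw [hGm]
      have hcg : ∀ j ∈ Finset.range n,
          (-1 : ℚ) ^ j * (n.choose (j + 1) : ℚ) * ((j : ℚ) + 1) ^ m
          = -((-1 : ℚ) ^ (j + 1) * (n.choose (j + 1) : ℚ) * ((j + 1 : ℕ) : ℚ) ^ m) :=
        fun j _ => by push_cast; ring
      rw [Finset.sum_congr rfl hcg, Finset.sum_neg_distrib]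
      simp
    rw [h4]; ring
  have step : ∀ j : ℕ, (-1 : ℚ) ^ (j + 1) * ((n + 1).choose (j + 1) : ℚ) * ((j : ℚ) + 1) ^ m
      = -((-1 : ℚ) ^ j * (n.choose j : ℚ) * ((j : ℚ) + 1) ^ m)
        - ((-1 : ℚ) ^ j * (n.choose (j + 1) : ℚ) * ((j : ℚ) + 1) ^ m) := by
    intro j
    rw [Nat.choose_succ_succ]
    push_cast
    ring
  have hmain : myG (n + 1) m
      = -(∑ j ∈ Finset.range (n + 1), (-1 : ℚ) ^ j * (n.choose j : ℚ) * ((j : ℚ) + 1) ^ m)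
        - ((0 : ℚ) ^ m - myG n m) + (0 : ℚ) ^ m := by
    rw [myG, Finset.sum_range_succ'
      (fun j => (-1 : ℚ) ^ j * ((n + 1).choose j : ℚ) * (j : ℚ) ^ m) (n + 1)]
    simp only [pow_zero, Nat.choose_zero_right, Nat.cast_one, one_mul, Nat.cast_zero,
      Nat.cast_add]
    rw [Finset.sum_congr rfl fun j (_ : j ∈ Finset.range (n + 1)) => step j]
    rw [Finset.sum_sub_distrib, Finset.sum_neg_distrib, h3]
  rw [hmain, h2, Finset.sum_range_succ, Nat.choose_self]
  push_cast
  ring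

private lemma myG_lt {n m : ℕ} (h : m < n) : myG n m = 0 := by
  induction n generalizing m with
  | zero => omega
  | succ n ih =>
    rw [myG_rec]
    rw [Finset.sum_eq_zero fun t ht => by
      rw [ih (lt_of_lt_of_le (Finset.mem_range.mp ht) (Nat.lt_succ_iff.mp h)), mul_zero]]
    ring

private lemma myG_self (n : ℕ) : myG n n = (-1 : ℚ) ^ n * (n.factorial : ℚ) := by
  induction n with
  | zero => simp [myG]
  | succ n ih =>
    rw [myG_rec, Finset.sum_range_succ, ih]
    rw [Finset.sum_eq_zero fun t ht => by rw [myG_lt (Finset.mem_range.mp ht), mul_zero]]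
    rw [Nat.choose_succ_self_right, Nat.factorial_succ]
    push_cast
    ring

private lemma myG_succ (n : ℕ) :
    myG n (n + 1) = (-1 : ℚ) ^ n * (n.factorial : ℚ) * n * (n + 1) / 2 := by
  induction n with
  | zero => simp [myG]
  | succ n ih =>
    rw [myG_rec, Finset.sum_range_succ, Finset.sum_range_succ, ih, myG_self]
    rw [Finset.sum_eq_zero fun t ht => by rw [myG_lt (Finset.mem_range.mp ht), mul_zero]]
    rw [Nat.choose_succ_self_right]
    have hc : ((n + 2).choose n : ℚ) = ((n : ℚ) + 2) * ((n : ℚ) + 1) / 2 := by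
      have hsymm : (n + 2).choose n = (n + 2).choose 2 := by
        rw [← Nat.choose_symm (by omega : n ≤ n + 2)]
        congr 1
        omega
      have hdvd : 2 ∣ (n + 2) * (n + 2 - 1) := by
        simpa [Nat.mul_comm] using (Nat.even_mul_succ_self (n + 1)).two_dvd
      rw [hsymm, Nat.choose_two_right,
        Nat.cast_div hdvd (by norm_num : (2 : ℚ) ≠ 0)]
      push_cast
      ring
    rw [hc, Nat.factorial_succ]
    push_cast
    ring

/-- For every integer `i ≥ 1`,
`∑_{j=0}^{i−1} (1/(i−1)!) C(i−1,j) (−1)^{i−1−j} j^i = i(i−1)/2`. -/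
theorem stmt_15 (i : ℕ) (hi : 1 ≤ i) :
    ∑ j ∈ Finset.range i,
        (1 / ((i - 1).factorial : ℚ)) * ((i - 1).choose j : ℚ) * (-1 : ℚ) ^ (i - 1 - j) *
          (j : ℚ) ^ i
      = (i : ℚ) * ((i : ℚ) - 1) / 2 := by
  obtain ⟨n, rfl⟩ : ∃ n, i = n + 1 := ⟨i - 1, (Nat.succ_pred_eq_of_pos hi).symm⟩
  have hfac : (n.factorial : ℚ) ≠ 0 := Nat.cast_ne_zero.mpr n.factorial_ne_zero
  have hsum : ∑ j ∈ Finset.range (n + 1),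
      (1 / ((n + 1 - 1).factorial : ℚ)) * ((n + 1 - 1).choose j : ℚ)
        * (-1 : ℚ) ^ (n + 1 - 1 - j) * (j : ℚ) ^ (n + 1)
      = (1 / (n.factorial : ℚ)) * (-1 : ℚ) ^ n * myG n (n + 1) := by
    rw [myG, Finset.mul_sum]
    refine Finset.sum_congr rfl fun j hj => ?_
    have hjn : j ≤ n := Nat.lt_succ_iff.mp (Finset.mem_range.mp hj)
    have hsign : (-1 : ℚ) ^ (n - j) * (-1 : ℚ) ^ j = (-1 : ℚ) ^ n := by
      rw [← pow_add, Nat.sub_add_cancel hjn]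
    have hjj : (-1 : ℚ) ^ j * (-1 : ℚ) ^ j = 1 := by
      rw [← pow_add, ← two_mul, pow_mul]
      norm_num
    simp only [Nat.add_sub_cancel]
    rw [← hsign]
    linear_combination (-(1 / (n.factorial : ℚ)) * (n.choose j : ℚ) * (j : ℚ) ^ (n + 1)
      * (-1 : ℚ) ^ (n - j)) * hjj
  rw [hsum, myG_succ]
  have h1 : (-1 : ℚ) ^ n * (-1 : ℚ) ^ n = 1 := by
    rw [← pow_add, ← two_mul, pow_mul]
    norm_num
  have h2 : (n.factorial : ℚ) / (n.factorial : ℚ) = 1 := div_self hfac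
  rw [show (1 / (n.factorial : ℚ)) * (-1 : ℚ) ^ n
      * ((-1 : ℚ) ^ n * (n.factorial : ℚ) * (n : ℚ) * ((n : ℚ) + 1) / 2)
      = ((-1 : ℚ) ^ n * (-1 : ℚ) ^ n) * ((n.factorial : ℚ) / (n.factorial : ℚ))
        * ((n : ℚ) * ((n : ℚ) + 1) / 2) from by ring, h1, h2]
  push_cast
  ring
end
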